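/- Let M be a deterministic program with high-security input H, low-security input L, and low-security output O. Then M is non-interferent if and only if CC(M) ≤ 0. -/
import Mathlib


/-!
Statement 4: A deterministic program `M : ℍ × 𝕃 → 𝕆` is non-interferent iff
`CC(M) ≤ 0`, where `CC(M) = max_μ SE[μ](M)` is the channel-capacity-based
quantitative information flow (the maximum taken over all probability
distributions `μ` on `ℍ × 𝕃`).
-/

/-- `p · log₂(1/p)`, one summand of the Shannon entropy. -/
noncomputable def entTerm (p : ℝ) : ℝ := p * Real.logb 2 (1 / p)

variable {Hi Li Oi : Type*}

/-- Marginal probability `μ(L = ℓ)`. -/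
noncomputable def pL [Fintype Hi] (μ : Hi × Li → ℝ) (ℓ : Li) : ℝ := ∑ h, μ (h, ℓ)

/-- Joint probability `μ(O = o, L = ℓ)` where `O = M(H,L)`. -/
noncomputable def pOL [Fintype Hi] [DecidableEq Oi] (M : Hi × Li → Oi) (μ : Hi × Li → ℝ)
    (o : Oi) (ℓ : Li) : ℝ := ∑ h, if M (h, ℓ) = o then μ (h, ℓ) else 0

/-- Conditional Shannon entropy `𝓗[μ](H|L) = Σ_ℓ μ(L=ℓ) · 𝓗[μ](H|L=ℓ)`. -/
noncomputable def condEntHL [Fintype Hi] [Fintype Li] (μ : Hi × Li → ℝ) : ℝ :=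
  ∑ ℓ : Li, pL μ ℓ * ∑ h : Hi, entTerm (μ (h, ℓ) / pL μ ℓ)

/-- Conditional Shannon entropy `𝓗[μ](H|O,L)` where `O = M(H,L)`. -/
noncomputable def condEntHOL [Fintype Hi] [Fintype Li] [Fintype Oi] [DecidableEq Oi]
    (M : Hi × Li → Oi) (μ : Hi × Li → ℝ) : ℝ :=
  ∑ ℓ : Li, ∑ o : Oi,
    pOL M μ o ℓ * ∑ h : Hi, entTerm ((if M (h, ℓ) = o then μ (h, ℓ) else 0) / pOL M μ o ℓ)

/-- Shannon-entropy-based quantitative information flow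
`SE[μ](M) = 𝓗[μ](H|L) − 𝓗[μ](H|O,L)`. -/
noncomputable def SE [Fintype Hi] [Fintype Li] [Fintype Oi] [DecidableEq Oi]
    (M : Hi × Li → Oi) (μ : Hi × Li → ℝ) : ℝ :=
  condEntHL μ - condEntHOL M μ

/-- Channel-capacity-based quantitative information flow
`CC(M) = max_μ SE[μ](M)`, the maximum over all probability distributions `μ`. -/
noncomputable def CC [Fintype Hi] [Fintype Li] [Fintype Oi] [DecidableEq Oi]
    (M : Hi × Li → Oi) : ℝ :=
  sSup {x : ℝ | ∃ μ : Hi × Li → ℝ, (∀ a, 0 ≤ μ a) ∧ (∑ a, μ a = 1) ∧ x = SE M μ}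

section Aux

open Classical

lemma entTerm_zero' : entTerm 0 = 0 := by simp [entTerm]

lemma entTerm_one' : entTerm 1 = 0 := by simp [entTerm]

lemma entTerm_half' : entTerm (1/2) = 1/2 := by simp [entTerm]

lemma entTerm_inv_two : entTerm 2⁻¹ = 2⁻¹ := by
  rw [show (2⁻¹:ℝ) = 1/2 by norm_num, entTerm_half']

lemma entTerm_nonneg' {p : ℝ} (h0 : 0 ≤ p) (h1 : p ≤ 1) : 0 ≤ entTerm p := by
  rcases eq_or_lt_of_le h0 with h | h
  · simp [entTerm, ← h]
  · apply mul_nonneg h.le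
    apply Real.logb_nonneg one_lt_two
    rw [le_div_iff₀ h]
    linarith

lemma entTerm_le_two' {p : ℝ} (h0 : 0 ≤ p) : entTerm p ≤ 2 := by
  rcases eq_or_lt_of_le h0 with h | h
  · simp [entTerm, ← h]
  · have hlog : Real.log (1 / p) ≤ 1 / p - 1 := Real.log_le_sub_one_of_pos (by positivity)
    have hpl : p * Real.log (1 / p) ≤ 1 := by
      have := mul_le_mul_of_nonneg_left hlog h.le
      have hc : p * (1 / p) = 1 := by field_simp
      nlinarith
    have hl2 : (0.6931471803 : ℝ) < Real.log 2 := Real.log_two_gt_d9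
    have hinv : (0:ℝ) < (Real.log 2)⁻¹ := by positivity
    have h2 : (Real.log 2)⁻¹ ≤ 2 := by
      rw [inv_le_comm₀ (by linarith) (by norm_num)]
      linarith
    unfold entTerm
    rw [Real.logb, div_eq_mul_inv, ← mul_assoc]
    nlinarith [mul_le_mul_of_nonneg_right hpl hinv.le]

/-- The witness distribution: mass `1/2` on `(h, ℓ)` and `1/2` on `(h', ℓ)`. -/
noncomputable def wit (h h' : Hi) (ℓ : Li) : Hi × Li → ℝ :=
  fun a => (if a = (h, ℓ) then 1/2 else 0) + (if a = (h', ℓ) then 1/2 else 0)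

lemma wit_val (h h' a : Hi) (ℓ b : Li) :
    wit h h' ℓ (a, b) = (if a = h ∧ b = ℓ then 1/2 else 0) +
      (if a = h' ∧ b = ℓ then 1/2 else 0) := by
  simp [wit, Prod.ext_iff]

lemma wit_nonneg (h h' : Hi) (ℓ : Li) : ∀ a, 0 ≤ wit h h' ℓ a := by
  intro a
  unfold wit
  split <;> split <;> norm_num

lemma wit_sum [Fintype Hi] [Fintype Li] {h h' : Hi} (hhh : h ≠ h') (ℓ : Li) :
    ∑ a, wit h h' ℓ a = 1 := by
  unfold wit
  rw [Finset.sum_add_distrib]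
  rw [Finset.sum_ite_eq' Finset.univ (h, ℓ), Finset.sum_ite_eq' Finset.univ (h', ℓ)]
  norm_num

lemma pL_wit [Fintype Hi] {h h' : Hi} (hhh : h ≠ h') (ℓ ℓ' : Li) :
    pL (wit h h' ℓ) ℓ' = if ℓ' = ℓ then 1 else 0 := by
  unfold pL
  by_cases hl : ℓ' = ℓ
  · rw [hl, if_pos rfl]
    have key : ∀ a : Hi, wit h h' ℓ (a, ℓ) =
        (if a = h then (1:ℝ)/2 else 0) + (if a = h' then 1/2 else 0) := by
      intro a; rw [wit_val]; simp
    rw [Finset.sum_congr rfl fun a _ => key a, Finset.sum_add_distrib,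
      Finset.sum_ite_eq' Finset.univ h, Finset.sum_ite_eq' Finset.univ h']
    norm_num
  · rw [if_neg hl]
    refine Finset.sum_eq_zero fun a _ => ?_
    rw [wit_val]
    simp [hl]

lemma condEntHL_wit [Fintype Hi] [Fintype Li] {h h' : Hi} (hhh : h ≠ h') (ℓ : Li) :
    condEntHL (wit h h' ℓ) = 1 := by
  unfold condEntHL
  rw [Finset.sum_eq_single ℓ]
  · rw [pL_wit hhh, if_pos rfl, one_mul]
    have key : ∀ a : Hi, entTerm (wit h h' ℓ (a, ℓ) / 1) =
        (if a = h then (1:ℝ)/2 else 0) + (if a = h' then 1/2 else 0) := by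
      intro a
      rw [div_one, wit_val]
      by_cases h1 : a = h
      · simp [h1, hhh, entTerm_inv_two]
      · by_cases h2 : a = h'
        · simp [h1, h2, Ne.symm hhh, entTerm_inv_two]
        · simp [h1, h2, entTerm_zero']
    rw [Finset.sum_congr rfl fun a _ => key a, Finset.sum_add_distrib,
      Finset.sum_ite_eq' Finset.univ h, Finset.sum_ite_eq' Finset.univ h']
    norm_num
  · intro ℓ' _ hl
    rw [pL_wit hhh, if_neg hl, zero_mul]
  · intro hmem
    exact absurd (Finset.mem_univ _) hmem

lemma pOL_wit [Fintype Hi] [DecidableEq Oi] (M : Hi × Li → Oi) {h h' : Hi} (hhh : h ≠ h')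
    (ℓ : Li) (o : Oi) (ℓ' : Li) :
    pOL M (wit h h' ℓ) o ℓ' =
      (if ℓ' = ℓ ∧ o = M (h, ℓ) then 1/2 else 0) +
      (if ℓ' = ℓ ∧ o = M (h', ℓ) then 1/2 else 0) := by
  unfold pOL
  by_cases hl : ℓ' = ℓ
  · rw [hl]
    have key : ∀ a : Hi, (if M (a, ℓ) = o then wit h h' ℓ (a, ℓ) else 0) =
        (if a = h ∧ o = M (h, ℓ) then (1:ℝ)/2 else 0) +
        (if a = h' ∧ o = M (h', ℓ) then 1/2 else 0) := by
      intro a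
      rw [wit_val]
      by_cases h1 : a = h
      · by_cases ho : M (h, ℓ) = o
        · simp [h1, hhh, ho]
        · have ho' : o ≠ M (h, ℓ) := fun e => ho e.symm
          simp [h1, hhh, ho, ho']
      · by_cases h2 : a = h'
        · by_cases ho : M (h', ℓ) = o
          · simp [h2, Ne.symm hhh, h1, ho]
          · have ho' : o ≠ M (h', ℓ) := fun e => ho e.symm
            simp [h2, Ne.symm hhh, h1, ho, ho']
        · simp [h1, h2]
    rw [Finset.sum_congr rfl fun a _ => key a, Finset.sum_add_distrib]
    simp only [ite_and]
    rw [Finset.sum_ite_eq' Finset.univ h, Finset.sum_ite_eq' Finset.univ h']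
    simp
  · rw [if_neg (fun p => hl p.1), if_neg (fun p => hl p.1)]
    refine (Finset.sum_eq_zero fun a _ => ?_).trans (by norm_num)
    rw [wit_val]
    simp [hl]

lemma condEntHOL_wit [Fintype Hi] [Fintype Li] [Fintype Oi] [DecidableEq Oi]
    (M : Hi × Li → Oi) {h h' : Hi} {ℓ : Li} (hne : M (h, ℓ) ≠ M (h', ℓ)) :
    condEntHOL M (wit h h' ℓ) = 0 := by
  have hhh : h ≠ h' := fun e => hne (by rw [e])
  unfold condEntHOL
  refine Finset.sum_eq_zero fun ℓ' _ => Finset.sum_eq_zero fun o _ => ?_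
  have key : ∀ a : Hi,
      entTerm ((if M (a, ℓ') = o then wit h h' ℓ (a, ℓ') else 0) /
        pOL M (wit h h' ℓ) o ℓ') = 0 := by
    intro a
    by_cases hl : ℓ' = ℓ
    · rw [hl]
      by_cases h1 : a = h
      · by_cases ho : M (h, ℓ) = o
        · have hp : pOL M (wit h h' ℓ) o ℓ = 1/2 := by
            rw [pOL_wit M hhh]
            have hne2 : o ≠ M (h', ℓ) := fun e => hne (ho.trans e)
            simp [ho, hne2]
          rw [h1, if_pos ho, hp, wit_val]
          norm_num [hhh, entTerm_one']
        · rw [h1, if_neg ho, zero_div, entTerm_zero']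
      · by_cases h2 : a = h'
        · by_cases ho : M (h', ℓ) = o
          · have hp : pOL M (wit h h' ℓ) o ℓ = 1/2 := by
              rw [pOL_wit M hhh]
              have hne2 : o ≠ M (h, ℓ) := fun e => hne (e.symm.trans ho.symm)
              simp [ho, hne2]
            rw [h2, if_pos ho, hp, wit_val]
            norm_num [Ne.symm hhh, entTerm_one']
          · rw [h2, if_neg ho, zero_div, entTerm_zero']
        · have hw : wit h h' ℓ (a, ℓ) = 0 := by
            rw [wit_val]
            simp [h1, h2]
          simp [hw, entTerm_zero']
    · have hw : wit h h' ℓ (a, ℓ') = 0 := by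
        rw [wit_val]
        simp [hl]
      simp [hw, entTerm_zero']
  rw [Finset.sum_congr rfl fun a _ => key a]
  simp

lemma SE_le_bound [Fintype Hi] [Fintype Li] [Fintype Oi] [DecidableEq Oi]
    (M : Hi × Li → Oi) (ν : Hi × Li → ℝ) (hν : ∀ a, 0 ≤ ν a) (hνs : ∑ a, ν a = 1) :
    SE M ν ≤ 2 * Fintype.card Hi * Fintype.card Li := by
  have hνs' : ∑ a : Hi, ∑ b : Li, ν (a, b) = 1 := by
    rw [← hνs, ← Fintype.sum_prod_type]
  have hpLnn : ∀ ℓ', 0 ≤ pL ν ℓ' := fun ℓ' =>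
    Finset.sum_nonneg fun a _ => hν (a, ℓ')
  have hpLle : ∀ ℓ', pL ν ℓ' ≤ 1 := by
    intro ℓ'
    rw [← hνs']
    refine Finset.sum_le_sum fun a _ => ?_
    exact Finset.single_le_sum (fun b _ => hν (a, b)) (Finset.mem_univ ℓ')
  have hOLnn : 0 ≤ condEntHOL M ν := by
    refine Finset.sum_nonneg fun ℓ' _ => Finset.sum_nonneg fun o _ => ?_
    have hp : 0 ≤ pOL M ν o ℓ' := Finset.sum_nonneg fun a _ => by
      split
      · exact hν _
      · exact le_rfl
    refine mul_nonneg hp (Finset.sum_nonneg fun a _ => ?_)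
    rcases eq_or_lt_of_le hp with hz | hz
    · rw [← hz]
      simp [entTerm_zero']
    · apply entTerm_nonneg'
      · refine div_nonneg ?_ hz.le
        split
        · exact hν _
        · exact le_rfl
      · rw [div_le_one hz]
        have hrfl : pOL M ν o ℓ' = ∑ a', (if M (a', ℓ') = o then ν (a', ℓ') else 0) := rfl
        rw [hrfl]
        refine Finset.single_le_sum
          (f := fun a' => if M (a', ℓ') = o then ν (a', ℓ') else 0)
          (fun a' _ => ?_) (Finset.mem_univ a)
        split
        · exact hν _
        · exact le_rfl
  have hHLle : condEntHL ν ≤ 2 * Fintype.card Hi * Fintype.card Li := by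
    unfold condEntHL
    calc ∑ ℓ' : Li, pL ν ℓ' * ∑ a : Hi, entTerm (ν (a, ℓ') / pL ν ℓ')
        ≤ ∑ _ℓ' : Li, 2 * (Fintype.card Hi : ℝ) := by
          refine Finset.sum_le_sum fun ℓ' _ => ?_
          have hinn : ∀ a : Hi, 0 ≤ entTerm (ν (a, ℓ') / pL ν ℓ') ∧
              entTerm (ν (a, ℓ') / pL ν ℓ') ≤ 2 := by
            intro a
            rcases eq_or_lt_of_le (hpLnn ℓ') with hz | hz
            · have hq : ν (a, ℓ') / pL ν ℓ' = 0 := by rw [← hz]; simp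
              rw [hq]
              simp [entTerm_zero']
            · have hd0 : 0 ≤ ν (a, ℓ') / pL ν ℓ' := div_nonneg (hν _) hz.le
              have hd1 : ν (a, ℓ') / pL ν ℓ' ≤ 1 := by
                rw [div_le_one hz]
                exact Finset.single_le_sum (fun a' _ => hν (a', ℓ')) (Finset.mem_univ a)
              exact ⟨entTerm_nonneg' hd0 hd1, entTerm_le_two' hd0⟩
          have hs0 : 0 ≤ ∑ a : Hi, entTerm (ν (a, ℓ') / pL ν ℓ') :=
            Finset.sum_nonneg fun a _ => (hinn a).1
          have hs2 : ∑ a : Hi, entTerm (ν (a, ℓ') / pL ν ℓ') ≤ 2 * Fintype.card Hi := by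
            have hcs := Finset.sum_le_card_nsmul Finset.univ
              (fun a => entTerm (ν (a, ℓ') / pL ν ℓ')) 2 (fun a _ => (hinn a).2)
            simpa [nsmul_eq_mul, mul_comm] using hcs
          calc pL ν ℓ' * ∑ a : Hi, entTerm (ν (a, ℓ') / pL ν ℓ')
              ≤ 1 * ∑ a : Hi, entTerm (ν (a, ℓ') / pL ν ℓ') :=
                mul_le_mul_of_nonneg_right (hpLle ℓ') hs0
            _ = ∑ a : Hi, entTerm (ν (a, ℓ') / pL ν ℓ') := one_mul _
            _ ≤ 2 * Fintype.card Hi := hs2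
      _ = 2 * Fintype.card Hi * Fintype.card Li := by
          simp [mul_comm, mul_assoc, mul_left_comm]
  have hSEeq : SE M ν = condEntHL ν - condEntHOL M ν := rfl
  rw [hSEeq]
  linarith

end Aux

/-- A program is non-interferent iff `CC(M) ≤ 0`. -/
theorem noninterferent_iff_CC_le_zero
    [Fintype Hi] [Fintype Li] [Fintype Oi] [DecidableEq Oi] [Nonempty Hi] [Nonempty Li]
    (M : Hi × Li → Oi) :
    (∀ (h h' : Hi) (ℓ : Li), M (h, ℓ) = M (h', ℓ)) ↔ CC M ≤ 0 := by
  classical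
  constructor
  · intro hni
    apply Real.sSup_le _ le_rfl
    rintro x ⟨μ, hpos, hsum, rfl⟩
    have key : condEntHOL M μ = condEntHL μ := by
      unfold condEntHOL condEntHL
      refine Finset.sum_congr rfl fun ℓ _ => ?_
      obtain ⟨h0⟩ := ‹Nonempty Hi›
      have hM : ∀ h, M (h, ℓ) = M (h0, ℓ) := fun h => hni h h0 ℓ
      rw [Finset.sum_eq_single (M (h0, ℓ))]
      · simp [pOL, pL, hM]
      · intro o _ ho
        have hz : pOL M μ o ℓ = 0 := Finset.sum_eq_zero fun h _ => by
          rw [hM h]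
          exact if_neg fun e => ho e.symm
        simp [hz]
      · intro hmem
        exact absurd (Finset.mem_univ _) hmem
    simp [SE, key]
  · intro hcc
    by_contra hni
    push_neg at hni
    obtain ⟨h, h', ℓ, hne⟩ := hni
    have hhh : h ≠ h' := fun e => hne (by rw [e])
    have hSE : SE M (wit h h' ℓ) = 1 := by
      rw [SE, condEntHL_wit hhh, condEntHOL_wit M hne]
      norm_num
    set S : Set ℝ :=
      {x : ℝ | ∃ μ : Hi × Li → ℝ, (∀ a, 0 ≤ μ a) ∧ (∑ a, μ a = 1) ∧ x = SE M μ} with hS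
    have hbdd : BddAbove S := by
      refine ⟨2 * Fintype.card Hi * Fintype.card Li, ?_⟩
      rintro x ⟨ν, hν, hνs, rfl⟩
      exact SE_le_bound M ν hν hνs
    have hmem : (1:ℝ) ∈ S := ⟨wit h h' ℓ, wit_nonneg h h' ℓ, wit_sum hhh ℓ, hSE.symm⟩
    have hle : (1:ℝ) ≤ sSup S := le_csSup hbdd hmem
    have hCC : CC M = sSup S := rfl
    rw [hCC] at hcc
    linarith
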